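/- In the setting of the foliation Σ_τ = {v = -P(y,s,τ)} of the Schwarzschild spacetime (physical metric g = s^{-2}ḡ), the gradient of the time function τ satisfies g(∇τ, ∇τ) = -s² P_τ^{-2} L, where L = -(2P_s + s²(1-2ms)P_s² + |∇P|²_{S²}). Moreover L = τ² + O(s), so for s small enough (depending only on τ₁, τ₂, f) each Σ_τ is spacelike. -/

import Mathlib

/-- Partial derivative of a function on the chart `ℝ²` in the `A`-th coordinate
direction. -/
noncomputable def pd (F : (Fin 2 → ℝ) → ℝ) (y : Fin 2 → ℝ) (A : Fin 2) : ℝ :=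
  fderiv ℝ F y (Pi.single A 1)

/-- `|∇F|²` with respect to the metric `σ` (in local coordinates). -/
noncomputable def gradSq (σ : (Fin 2 → ℝ) → Matrix (Fin 2) (Fin 2) ℝ)
    (F : (Fin 2 → ℝ) → ℝ) (y : Fin 2 → ℝ) : ℝ :=
  ∑ A, ∑ B, (σ y)⁻¹ A B * pd F y A * pd F y B

/-- `P_τ`. -/
noncomputable def Ptau (P : (Fin 2 → ℝ) → ℝ → ℝ → ℝ) (y : Fin 2 → ℝ) (s τ : ℝ) : ℝ :=
  deriv (fun τ' => P y s τ') τ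

/-- `P_s`. -/
noncomputable def Psd (P : (Fin 2 → ℝ) → ℝ → ℝ → ℝ) (y : Fin 2 → ℝ) (s τ : ℝ) : ℝ :=
  deriv (fun s' => P y s' τ) s

/-- `P_A`. -/
noncomputable def PAd (P : (Fin 2 → ℝ) → ℝ → ℝ → ℝ) (y : Fin 2 → ℝ) (s τ : ℝ)
    (A : Fin 2) : ℝ :=
  pd (fun y' => P y' s τ) y A

/-- `L = -(2P_s + s²(1-2ms)P_s² + |∇P|²)`. -/
noncomputable def Lfun (m : ℝ) (σ : (Fin 2 → ℝ) → Matrix (Fin 2) (Fin 2) ℝ)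
    (P : (Fin 2 → ℝ) → ℝ → ℝ → ℝ) (y : Fin 2 → ℝ) (s τ : ℝ) : ℝ :=
  -(2 * Psd P y s τ + s^2 * (1 - 2*m*s) * (Psd P y s τ)^2
      + gradSq σ (fun y' => P y' s τ) y)

/-- `g(∇τ,∇τ) = g^{ab}∂_aτ ∂_bτ` computed from `g^{ab} = s²ḡ^{ab}`
(`ḡ^{AB} = σ^{AB}`, `ḡ^{ss} = s²(1-2ms)`, `ḡ^{sv} = 1`, `ḡ^{vv} = 0`) and
`∂_Aτ = -P_A/P_τ`, `∂_sτ = -P_s/P_τ`, `∂_vτ = -1/P_τ`. -/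
noncomputable def gradTauSq (m : ℝ) (σ : (Fin 2 → ℝ) → Matrix (Fin 2) (Fin 2) ℝ)
    (P : (Fin 2 → ℝ) → ℝ → ℝ → ℝ) (y : Fin 2 → ℝ) (s τ : ℝ) : ℝ :=
  s^2 * ((∑ A, ∑ B, (σ y)⁻¹ A B * (-(PAd P y s τ A) / Ptau P y s τ)
        * (-(PAd P y s τ B) / Ptau P y s τ))
      + s^2 * (1 - 2*m*s) * (-(Psd P y s τ) / Ptau P y s τ)^2
      + 2 * (-(Psd P y s τ) / Ptau P y s τ) * (-1 / Ptau P y s τ))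

/- ### Auxiliary lemmas -/

lemma pd_contDiff {F : (Fin 2 → ℝ) → ℝ} (hF : ContDiff ℝ (⊤ : ℕ∞) F) (A : Fin 2) :
    ContDiff ℝ (⊤ : ℕ∞) (fun y => pd F y A) := by
  unfold pd
  exact (hF.fderiv_right (by simp)).clm_apply contDiff_const

lemma inv_entry_contDiff (σ : (Fin 2 → ℝ) → Matrix (Fin 2) (Fin 2) ℝ)
    (hσpos : ∀ y, (σ y).PosDef)
    (hσsm : ∀ A B, ContDiff ℝ (⊤ : ℕ∞) (fun y => σ y A B)) (A B : Fin 2) :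
    ContDiff ℝ (⊤ : ℕ∞) (fun y => (σ y)⁻¹ A B) := by
  have hd : ∀ y, (σ y).det ≠ 0 := fun y => ((hσpos y).det_pos).ne'
  have hdet : ContDiff ℝ (⊤ : ℕ∞) (fun y => (σ y).det) := by
    simp only [Matrix.det_fin_two]
    exact ((hσsm 0 0).mul (hσsm 1 1)).sub ((hσsm 0 1).mul (hσsm 1 0))
  have hadj : ContDiff ℝ (⊤ : ℕ∞) (fun y => (σ y).adjugate A B) := by
    fin_cases A <;> fin_cases B <;> simp [Matrix.adjugate_fin_two] <;>
      first
      | exact hσsm 1 1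
      | exact (hσsm 0 1).neg
      | exact (hσsm 1 0).neg
      | exact hσsm 0 0
  have he : (fun y => (σ y)⁻¹ A B) = fun y => ((σ y).det)⁻¹ * (σ y).adjugate A B := by
    funext y
    rw [Matrix.inv_def]
    simp [Ring.inverse_eq_inv']
  rw [he]
  exact (hdet.inv hd).mul hadj

lemma gradSq_contDiff (σ : (Fin 2 → ℝ) → Matrix (Fin 2) (Fin 2) ℝ)
    (hσpos : ∀ y, (σ y).PosDef)
    (hσsm : ∀ A B, ContDiff ℝ (⊤ : ℕ∞) (fun y => σ y A B))
    {F : (Fin 2 → ℝ) → ℝ} (hF : ContDiff ℝ (⊤ : ℕ∞) F) :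
    ContDiff ℝ (⊤ : ℕ∞) (gradSq σ F) := by
  unfold gradSq
  exact ContDiff.sum fun A _ => ContDiff.sum fun B _ =>
    ((inv_entry_contDiff σ hσpos hσsm A B).mul (pd_contDiff hF A)).mul (pd_contDiff hF B)

lemma pd_combo {F1 F2 F3 F4 : (Fin 2 → ℝ) → ℝ} (h1 : Differentiable ℝ F1)
    (h2 : Differentiable ℝ F2) (h3 : Differentiable ℝ F3) (h4 : Differentiable ℝ F4)
    (a b c d : ℝ) (y : Fin 2 → ℝ) (A : Fin 2) :
    pd (fun y => F1 y + (a * F2 y + (b * F3 y + (c * F4 y + d)))) y A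
      = pd F1 y A + a * pd F2 y A + b * pd F3 y A + c * pd F4 y A := by
  have H : HasFDerivAt (fun y => F1 y + (a * F2 y + (b * F3 y + (c * F4 y + d))))
      (fderiv ℝ F1 y + (a • fderiv ℝ F2 y + (b • fderiv ℝ F3 y + c • fderiv ℝ F4 y))) y :=
    (h1 y).hasFDerivAt.add (((h2 y).hasFDerivAt.const_mul a).add
      (((h3 y).hasFDerivAt.const_mul b).add (((h4 y).hasFDerivAt.const_mul c).add_const d)))
  simp [pd, H.fderiv, smul_smul]
  ring

/-- `Q_A`: the `O(s)` part of `P_A`, divided by `s`. -/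
noncomputable def Qa (σ : (Fin 2 → ℝ) → Matrix (Fin 2) (Fin 2) ℝ)
    (f lap innert : (Fin 2 → ℝ) → ℝ) (y : Fin 2 → ℝ) (s τ : ℝ) (A : Fin 2) : ℝ :=
  -(pd (gradSq σ f) y A)/2 + s/4 * (τ^2 * pd lap y A + pd innert y A)

/-- Closed form of `P_s`. -/
noncomputable def Psform (σ : (Fin 2 → ℝ) → Matrix (Fin 2) (Fin 2) ℝ)
    (f lap innert : (Fin 2 → ℝ) → ℝ) (y : Fin 2 → ℝ) (s τ : ℝ) : ℝ :=
  -(τ^2 + gradSq σ f y)/2 + s * ((τ^2 * lap y + innert y)/2)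

/-- The remainder: `L = τ² - s · Rem`. -/
noncomputable def Rem (m : ℝ) (σ : (Fin 2 → ℝ) → Matrix (Fin 2) (Fin 2) ℝ)
    (f lap innert : (Fin 2 → ℝ) → ℝ) (y : Fin 2 → ℝ) (s τ : ℝ) : ℝ :=
  (τ^2 * lap y + innert y)
  + s * (1 - 2*m*s) * (Psform σ f lap innert y s τ)^2
  + ∑ A, ∑ B, (σ y)⁻¹ A B *
      (pd f y A * Qa σ f lap innert y s τ B + Qa σ f lap innert y s τ A * pd f y B
        + s * Qa σ f lap innert y s τ A * Qa σ f lap innert y s τ B)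

section closed
variable (m : ℝ) (σ : (Fin 2 → ℝ) → Matrix (Fin 2) (Fin 2) ℝ)
  (f lap innert : (Fin 2 → ℝ) → ℝ)
  (P : (Fin 2 → ℝ) → ℝ → ℝ → ℝ)
  (hP : ∀ y s τ, P y s τ = f y - s/2 * (τ^2 + gradSq σ f y)
      + s^2/2 * ((1/2) * (τ^2 * lap y + innert y)))

include hP

lemma Ptau_eq (y : Fin 2 → ℝ) (s τ : ℝ) :
    Ptau P y s τ = (-s/2 + s^2/4 * lap y) * (2*τ) := by
  have hfe : (fun τ' => P y s τ')
      = fun τ' => (f y - s/2 * gradSq σ f y + s^2/4 * innert y)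
          + (-s/2 + s^2/4 * lap y) * τ'^2 := by
    funext τ'; rw [hP]; ring
  unfold Ptau
  rw [hfe]
  have h : HasDerivAt (fun τ' : ℝ => (f y - s/2 * gradSq σ f y + s^2/4 * innert y)
      + (-s/2 + s^2/4 * lap y) * τ'^2) ((-s/2 + s^2/4 * lap y) * (2*τ^1)) τ :=
    ((hasDerivAt_pow 2 τ).const_mul _).const_add _
  simpa using h.deriv

lemma Psd_eq (y : Fin 2 → ℝ) (s τ : ℝ) :
    Psd P y s τ = Psform σ f lap innert y s τ := by
  have hfe : (fun s' => P y s' τ)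
      = fun s' => f y + (-(τ^2 + gradSq σ f y)/2) * s'
          + ((τ^2 * lap y + innert y)/4) * s'^2 := by
    funext s'; rw [hP]; ring
  unfold Psd
  rw [hfe]
  have h : HasDerivAt (fun s' : ℝ => f y + (-(τ^2 + gradSq σ f y)/2) * s'
      + ((τ^2 * lap y + innert y)/4) * s'^2)
      ((-(τ^2 + gradSq σ f y)/2) * 1 + ((τ^2 * lap y + innert y)/4) * (2*s^1)) s :=
    (((hasDerivAt_id s).const_mul _).const_add _).add ((hasDerivAt_pow 2 s).const_mul _)
  have := h.deriv
  rw [this]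
  unfold Psform
  ring

variable (hσpos : ∀ y, (σ y).PosDef)
  (hσsm : ∀ A B, ContDiff ℝ (⊤ : ℕ∞) (fun y => σ y A B))
  (hf : ContDiff ℝ (⊤ : ℕ∞) f) (hlap : ContDiff ℝ (⊤ : ℕ∞) lap) (hint : ContDiff ℝ (⊤ : ℕ∞) innert)

include hσpos hσsm hf hlap hint

lemma PAd_eq (y : Fin 2 → ℝ) (s τ : ℝ) (A : Fin 2) :
    pd (fun y' => P y' s τ) y A = pd f y A + s * Qa σ f lap innert y s τ A := by
  have hG : ContDiff ℝ (⊤ : ℕ∞) (gradSq σ f) := gradSq_contDiff σ hσpos hσsm hf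
  have hfe : (fun y' => P y' s τ)
      = fun y' => f y' + ((-s/2) * gradSq σ f y' + ((s^2/4 * τ^2) * lap y'
          + ((s^2/4) * innert y' + (-s/2 * τ^2)))) := by
    funext y'; rw [hP]; ring
  rw [hfe, pd_combo (hf.differentiable (by simp)) (hG.differentiable (by simp))
    (hlap.differentiable (by simp)) (hint.differentiable (by simp))]
  unfold Qa
  ring

set_option maxHeartbeats 2000000 in
lemma Lfun_eq (y : Fin 2 → ℝ) (s τ : ℝ) :
    Lfun m σ P y s τ = τ^2 - s * Rem m σ f lap innert y s τ := by
  have hGexp : gradSq σ f y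
      = (σ y)⁻¹ 0 0 * pd f y 0 * pd f y 0 + (σ y)⁻¹ 0 1 * pd f y 0 * pd f y 1
        + ((σ y)⁻¹ 1 0 * pd f y 1 * pd f y 0 + (σ y)⁻¹ 1 1 * pd f y 1 * pd f y 1) := by
    unfold gradSq
    simp [Fin.sum_univ_two]
  unfold Lfun Rem Psform gradSq
  simp only [Fin.sum_univ_two, PAd_eq σ f lap innert P hP hσpos hσsm hf hlap hint,
    Psd_eq σ f lap innert P hP]
  unfold Psform
  rw [hGexp]
  ring

end closed

/-- Lemma 2.2 of the paper (in local coordinates): for the foliation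
`Σ_τ = {v = -P(y,s,τ)}` of the Schwarzschild spacetime one has
`g(∇τ,∇τ) = -s²P_τ⁻²L` with `L = -(2P_s + s²(1-2ms)P_s² + |∇P|²)`; moreover
`L = τ² + O(s)`, so for `s` small (depending only on `τ₁,τ₂,f`) each `Σ_τ` is
spacelike, i.e. `g(∇τ,∇τ) < 0`. -/
theorem stmt9 (m : ℝ) (hm : 0 < m)
    (σ : (Fin 2 → ℝ) → Matrix (Fin 2) (Fin 2) ℝ)
    (hσpos : ∀ y, (σ y).PosDef)
    (hσsm : ∀ A B, ContDiff ℝ (⊤ : ℕ∞) (fun y => σ y A B))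
    (f lap innert : (Fin 2 → ℝ) → ℝ)
    (hf : ContDiff ℝ (⊤ : ℕ∞) f) (hlap : ContDiff ℝ (⊤ : ℕ∞) lap) (hint : ContDiff ℝ (⊤ : ℕ∞) innert)
    (τ₁ τ₂ : ℝ) (hτ1 : 0 < τ₁) (hτ12 : τ₁ < τ₂)
    (P : (Fin 2 → ℝ) → ℝ → ℝ → ℝ)
    (hP : ∀ y s τ, P y s τ = f y - s/2 * (τ^2 + gradSq σ f y)
        + s^2/2 * ((1/2) * (τ^2 * lap y + innert y))) :
    (∀ y s τ, Ptau P y s τ ≠ 0 →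
      gradTauSq m σ P y s τ = -(s^2) * ((Ptau P y s τ)⁻¹)^2 * Lfun m σ P y s τ) ∧
    ∀ K : Set (Fin 2 → ℝ), IsCompact K →
      ∃ s₀ > (0:ℝ), ∃ C > (0:ℝ), ∀ y ∈ K, ∀ s τ, 0 < s → s < s₀ → τ₁ < τ → τ < τ₂ →
        |Lfun m σ P y s τ - τ^2| ≤ C * s ∧ gradTauSq m σ P y s τ < 0 := by
  have hpart1 : ∀ y s τ, Ptau P y s τ ≠ 0 →
      gradTauSq m σ P y s τ = -(s^2) * ((Ptau P y s τ)⁻¹)^2 * Lfun m σ P y s τ := by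
    intro y s τ hne
    unfold gradTauSq Lfun gradSq
    simp only [Fin.sum_univ_two]
    have h0 : pd (fun y' => P y' s τ) y 0 = PAd P y s τ 0 := rfl
    have h1 : pd (fun y' => P y' s τ) y 1 = PAd P y s τ 1 := rfl
    rw [h0, h1]
    field_simp
    ring
  refine ⟨hpart1, fun K hK => ?_⟩
  -- continuity of the remainder
  have hG : ContDiff ℝ (⊤ : ℕ∞) (gradSq σ f) := gradSq_contDiff σ hσpos hσsm hf
  have cG : Continuous (gradSq σ f) := hG.continuous
  have cpG : ∀ A, Continuous fun y => pd (gradSq σ f) y A :=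
    fun A => (pd_contDiff hG A).continuous
  have cpf : ∀ A, Continuous fun y => pd f y A := fun A => (pd_contDiff hf A).continuous
  have cplap : ∀ A, Continuous fun y => pd lap y A := fun A => (pd_contDiff hlap A).continuous
  have cpint : ∀ A, Continuous fun y => pd innert y A := fun A => (pd_contDiff hint A).continuous
  have clap : Continuous lap := hlap.continuous
  have cint : Continuous innert := hint.continuous
  have cinv : ∀ A B, Continuous fun y => (σ y)⁻¹ A B :=
    fun A B => (inv_entry_contDiff σ hσpos hσsm A B).continuous
  have cy : Continuous fun p : (Fin 2 → ℝ) × ℝ × ℝ => p.1 := continuous_fst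
  have cs : Continuous fun p : (Fin 2 → ℝ) × ℝ × ℝ => p.2.1 :=
    continuous_fst.comp continuous_snd
  have cτ : Continuous fun p : (Fin 2 → ℝ) × ℝ × ℝ => p.2.2 :=
    continuous_snd.comp continuous_snd
  have cQa : ∀ A, Continuous fun p : (Fin 2 → ℝ) × ℝ × ℝ =>
      Qa σ f lap innert p.1 p.2.1 p.2.2 A := by
    intro A
    unfold Qa
    exact (((cpG A).comp cy).neg.div_const 2).add
      ((cs.div_const 4).mul (((cτ.pow 2).mul ((cplap A).comp cy)).add ((cpint A).comp cy)))
  have cPs : Continuous fun p : (Fin 2 → ℝ) × ℝ × ℝ =>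
      Psform σ f lap innert p.1 p.2.1 p.2.2 := by
    unfold Psform
    exact ((((cτ.pow 2).add (cG.comp cy)).neg).div_const 2).add
      (cs.mul ((((cτ.pow 2).mul (clap.comp cy)).add (cint.comp cy)).div_const 2))
  have tAB : ∀ A B : Fin 2, Continuous fun p : (Fin 2 → ℝ) × ℝ × ℝ =>
      (σ p.1)⁻¹ A B * (pd f p.1 A * Qa σ f lap innert p.1 p.2.1 p.2.2 B
        + Qa σ f lap innert p.1 p.2.1 p.2.2 A * pd f p.1 B
        + p.2.1 * Qa σ f lap innert p.1 p.2.1 p.2.2 A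
          * Qa σ f lap innert p.1 p.2.1 p.2.2 B) := by
    intro A B
    exact ((cinv A B).comp cy).mul
      (((((cpf A).comp cy).mul (cQa B)).add ((cQa A).mul ((cpf B).comp cy))).add
        ((cs.mul (cQa A)).mul (cQa B)))
  have hRemCont : Continuous fun p : (Fin 2 → ℝ) × ℝ × ℝ =>
      Rem m σ f lap innert p.1 p.2.1 p.2.2 := by
    unfold Rem
    simp only [Fin.sum_univ_two]
    exact ((((cτ.pow 2).mul (clap.comp cy)).add (cint.comp cy)).add
        ((cs.mul (continuous_const.sub ((continuous_const.mul cs)))).mul (cPs.pow 2))).add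
      (((tAB 0 0).add (tAB 0 1)).add ((tAB 1 0).add (tAB 1 1)))
  obtain ⟨C0, hC0⟩ := (hK.prod ((isCompact_Icc (a := (0:ℝ)) (b := 1)).prod
      (isCompact_Icc (a := τ₁) (b := τ₂)))).exists_bound_of_continuousOn
      hRemCont.continuousOn
  obtain ⟨B0, hB0⟩ := hK.exists_bound_of_continuousOn clap.continuousOn
  set B : ℝ := max B0 0 with hBdef
  have hBnn : 0 ≤ B := le_max_right _ _
  set C : ℝ := max C0 0 + 1 with hCdef
  have hCpos : 0 < C := by positivity
  have hC0leC : C0 ≤ C := le_trans (le_max_left _ _) (by linarith)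
  refine ⟨min 1 (min (1/(B+1)) (τ₁^2/C)), by positivity, C, hCpos, ?_⟩
  intro y hy s τ hs hss₀ hτa hτb
  have hs1 : s ≤ 1 := le_trans hss₀.le (min_le_left _ _)
  have hsB : s < 1/(B+1) := lt_of_lt_of_le hss₀ (le_trans (min_le_right _ _) (min_le_left _ _))
  have hsC : s < τ₁^2/C := lt_of_lt_of_le hss₀ (le_trans (min_le_right _ _) (min_le_right _ _))
  have hmem : (y, s, τ) ∈ K ×ˢ (Set.Icc (0:ℝ) 1 ×ˢ Set.Icc τ₁ τ₂) :=
    ⟨hy, ⟨hs.le, hs1⟩, ⟨hτa.le, hτb.le⟩⟩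
  have hRb : |Rem m σ f lap innert y s τ| ≤ C0 := by
    have := hC0 _ hmem
    simpa [Real.norm_eq_abs] using this
  have hLeq : Lfun m σ P y s τ = τ^2 - s * Rem m σ f lap innert y s τ :=
    Lfun_eq m σ f lap innert P hP hσpos hσsm hf hlap hint y s τ
  have hsCmul : s * C < τ₁^2 := by
    rw [lt_div_iff₀ hCpos] at hsC
    linarith
  have hτsq : τ₁^2 < τ^2 := by nlinarith
  have hRle : Rem m σ f lap innert y s τ ≤ C := le_trans (le_trans (le_abs_self _) hRb) hC0leC
  have hLpos : 0 < Lfun m σ P y s τ := by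
    rw [hLeq]
    have h1 : s * Rem m σ f lap innert y s τ ≤ s * C := mul_le_mul_of_nonneg_left hRle hs.le
    have h2 : s * C = C * s := mul_comm s C
    nlinarith
  constructor
  · rw [hLeq]
    have : |τ^2 - s * Rem m σ f lap innert y s τ - τ^2| = s * |Rem m σ f lap innert y s τ| := by
      rw [show τ^2 - s * Rem m σ f lap innert y s τ - τ^2 = -(s * Rem m σ f lap innert y s τ)
        by ring, abs_neg, abs_mul, abs_of_pos hs]
    rw [this]
    calc s * |Rem m σ f lap innert y s τ| ≤ s * C0 := by
          exact mul_le_mul_of_nonneg_left hRb hs.le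
      _ ≤ C * s := by nlinarith
  · -- Ptau ≠ 0
    have hlapb : lap y ≤ B := by
      have := hB0 y hy
      rw [Real.norm_eq_abs] at this
      exact le_trans (le_abs_self _) (le_trans this (le_max_left _ _))
    have hsB1 : s * (B + 1) < 1 := by
      rw [lt_div_iff₀ (by linarith : (0:ℝ) < B + 1)] at hsB
      linarith
    have hfac : -s/2 + s^2/4 * lap y < 0 := by
      nlinarith [mul_le_mul_of_nonneg_left hlapb (by positivity : (0:ℝ) ≤ s^2),
        mul_pos hs hs]
    have hτpos : 0 < τ := lt_trans hτ1 hτa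
    have hPtneg : Ptau P y s τ < 0 := by
      rw [Ptau_eq σ f lap innert P hP]
      exact mul_neg_of_neg_of_pos hfac (by linarith)
    have hPtne : Ptau P y s τ ≠ 0 := ne_of_lt hPtneg
    rw [hpart1 y s τ hPtne]
    have hinv2 : 0 < ((Ptau P y s τ)⁻¹)^2 := by
      have : (Ptau P y s τ)⁻¹ ≠ 0 := inv_ne_zero hPtne
      positivity
    have hprod : 0 < s^2 * ((Ptau P y s τ)⁻¹)^2 * Lfun m σ P y s τ :=
      mul_pos (mul_pos (pow_pos hs 2) hinv2) hLpos
    linarith [hprod, show -(s^2) * ((Ptau P y s τ)⁻¹)^2 * Lfun m σ P y s τ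
      = -(s^2 * ((Ptau P y s τ)⁻¹)^2 * Lfun m σ P y s τ) from by ring]
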